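/- arXiv:2008.05645 — 7 statements merged into one kernel-verified Lean document; each statement's English description precedes it below -/
import Mathlib

section
/- Let ℓ ≥ 5 be a prime, and let ζ be a primitive ℓ-th root of unity in a field K of characteristic different from ℓ. Then the determinant of the ℓ × ℓ Vandermonde matrix V(ζ) = (ζ^{ij})_{0 ≤ i,j ≤ ℓ−1} equals ((−1)^{(ℓ−1)(ℓ+1)/8} · (ζ−1)(ζ²−1)···(ζ^{(ℓ−1)/2}−1))^ℓ. -/
/-!
By the Vandermonde formula, `det V(ζ) = ∏_{i<j} (ζ^j - ζ^i)`. Grouping the factors by `d = j - i`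
gives `∏_{d=1}^{ℓ-1} ζ^{T(ℓ-d)} (ζ^d - 1)^{ℓ-d}` with `T(k) = 0 + 1 + ⋯ + (k-1)`. Since `ζ^ℓ = 1`,
`ζ^{ℓ-d} - 1 = -ζ^{ℓ-d} (ζ^d - 1)`, so the factors for `d` and `ℓ - d` combine to
`(-1)^d ζ^{T(ℓ)} (ζ^d - 1)^ℓ`, and `ζ^{T(ℓ)} = 1` because `T(ℓ) = ℓ (ℓ-1)/2` is a multiple of `ℓ`
for odd `ℓ`. The sign is `(-1)^{1 + ⋯ + (ℓ-1)/2} = (-1)^{(ℓ²-1)/8}`, which is unchanged by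
raising to the odd power `ℓ`.
-/

open Finset

theorem Finset.sum_Icc_one_id_mul_two (m : ℕ) : (∑ d ∈ Icc 1 m, d) * 2 = m * (m + 1) := by
  induction m with
  | zero => simp
  | succ m ih => rw [sum_Icc_succ_top (by omega), add_mul, ih]; ring

section CommMonoid

variable {M : Type*} [CommMonoid M]

theorem Fin.prod_univ_prod_Ioi_eq_prod_range_prod_Ioo (n : ℕ) (f : ℕ → ℕ → M) :
    ∏ i : Fin n, ∏ j ∈ Ioi i, f i j = ∏ i ∈ range n, ∏ j ∈ Ioo i n, f i j := by
  rw [← Fin.prod_univ_eq_prod_range (fun i => ∏ j ∈ Ioo i n, f i j)]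
  refine prod_congr rfl fun i _ => ?_
  rw [← Fin.map_valEmbedding_Ioi, prod_map]
  rfl

theorem Finset.prod_range_prod_Ioo_eq_prod_Ico_prod_range (n : ℕ) (f : ℕ → ℕ → M) :
    ∏ i ∈ range n, ∏ j ∈ Ioo i n, f i j = ∏ d ∈ Ico 1 n, ∏ i ∈ range (n - d), f i (i + d) := by
  rw [prod_sigma', prod_sigma']
  refine prod_nbij' (fun p => ⟨p.2 - p.1, p.1⟩) (fun p => ⟨p.2, p.2 + p.1⟩) ?_ ?_ ?_ ?_ ?_
  all_goals
    rintro ⟨x, y⟩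
    simp only [mem_sigma, mem_range, mem_Ioo, mem_Ico]
    intro h
  all_goals first | omega | (congr 1; omega)

theorem Finset.prod_Ico_one_two_mul_add_one (f : ℕ → M) (m : ℕ) :
    ∏ d ∈ Ico 1 (2 * m + 1), f d = ∏ d ∈ Icc 1 m, f d * f (2 * m + 1 - d) := by
  rw [prod_mul_distrib, ← Ico_add_one_right_eq_Icc, prod_Ico_reflect _ _ (by omega),
    ← prod_Ico_consecutive _ (by omega : 1 ≤ m + 1) (by omega : m + 1 ≤ 2 * m + 1)]
  congr 3
  omega

theorem Finset.prod_range_pow_add (ζ : M) (a b : ℕ) :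
    ∏ i ∈ range (a + b), ζ ^ i =
      (∏ i ∈ range a, ζ ^ i) * (∏ i ∈ range b, ζ ^ i) * ζ ^ (a * b) := by
  rw [prod_range_add, mul_right_comm, mul_assoc]
  simp only [pow_add, prod_mul_distrib, prod_const, card_range, ← pow_mul]

theorem Finset.prod_range_two_mul_add_one_pow_eq_one {ζ : M} {m : ℕ}
    (hζ : ζ ^ (2 * m + 1) = 1) : ∏ i ∈ range (2 * m + 1), ζ ^ i = 1 := by
  have hsum : ∑ i ∈ range (2 * m + 1), i = (2 * m + 1) * m := by
    rw [sum_range_id, Nat.add_sub_cancel, mul_left_comm, Nat.mul_div_cancel_left _ two_pos]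
  rw [prod_pow_eq_pow_sum, hsum, pow_mul, hζ, one_pow]

end CommMonoid

section CommRing

variable {R : Type*} [CommRing R]

theorem Matrix.det_of_pow_mul_eq_prod_Ico (ζ : R) (n : ℕ) :
    (Matrix.of fun i j : Fin n => ζ ^ ((i : ℕ) * (j : ℕ))).det =
      ∏ d ∈ Ico 1 n, (∏ i ∈ range (n - d), ζ ^ i) * (ζ ^ d - 1) ^ (n - d) := by
  have hV : (Matrix.of fun i j : Fin n => ζ ^ ((i : ℕ) * (j : ℕ))) =
      Matrix.vandermonde fun i : Fin n => ζ ^ (i : ℕ) := by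
    ext i j
    simp [Matrix.vandermonde, ← pow_mul]
  rw [hV, Matrix.det_vandermonde,
    Fin.prod_univ_prod_Ioi_eq_prod_range_prod_Ioo n fun i j => ζ ^ j - ζ ^ i,
    prod_range_prod_Ioo_eq_prod_Ico_prod_range]
  refine prod_congr rfl fun d _ => ?_
  calc ∏ i ∈ range (n - d), (ζ ^ (i + d) - ζ ^ i)
      = ∏ i ∈ range (n - d), ζ ^ i * (ζ ^ d - 1) := prod_congr rfl fun i _ => by ring
    _ = _ := by rw [prod_mul_distrib, prod_const, card_range]

theorem prod_range_pow_mul_sub_one_pow_mul_reflect {ζ : R} {n d : ℕ} (hζ : ζ ^ n = 1)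
    (hd : d ≤ n) :
    (∏ i ∈ range (n - d), ζ ^ i) * (ζ ^ d - 1) ^ (n - d) *
      ((∏ i ∈ range (n - (n - d)), ζ ^ i) * (ζ ^ (n - d) - 1) ^ (n - (n - d))) =
      (-1) ^ d * (∏ i ∈ range n, ζ ^ i) * (ζ ^ d - 1) ^ n := by
  obtain ⟨a, rfl⟩ := Nat.exists_eq_add_of_le' hd
  have hflip : ζ ^ a - 1 = -(ζ ^ a * (ζ ^ d - 1)) := by
    linear_combination (pow_add ζ a d).symm.trans hζ
  rw [Nat.add_sub_cancel, Nat.add_sub_cancel_left, hflip, prod_range_pow_add, neg_pow, mul_pow,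
    ← pow_mul, pow_add (ζ ^ d - 1)]
  ring

theorem Matrix.det_of_pow_mul_of_pow_eq_one {ζ : R} {m : ℕ} (hζ : ζ ^ (2 * m + 1) = 1) :
    (Matrix.of fun i j : Fin (2 * m + 1) => ζ ^ ((i : ℕ) * (j : ℕ))).det =
      ((-1) ^ (∑ d ∈ Icc 1 m, d) * ∏ d ∈ Icc 1 m, (ζ ^ d - 1)) ^ (2 * m + 1) := by
  have hpair : ∀ d ∈ Icc 1 m,
      (∏ i ∈ range (2 * m + 1 - d), ζ ^ i) * (ζ ^ d - 1) ^ (2 * m + 1 - d) *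
        ((∏ i ∈ range (2 * m + 1 - (2 * m + 1 - d)), ζ ^ i) *
          (ζ ^ (2 * m + 1 - d) - 1) ^ (2 * m + 1 - (2 * m + 1 - d))) =
        (-1) ^ d * (ζ ^ d - 1) ^ (2 * m + 1) := fun d hd => by
    rw [prod_range_pow_mul_sub_one_pow_mul_reflect hζ (by grind),
      prod_range_two_mul_add_one_pow_eq_one hζ, mul_one]
  have hsign : ((-1 : R) ^ (∑ d ∈ Icc 1 m, d)) ^ (2 * m + 1) = (-1) ^ (∑ d ∈ Icc 1 m, d) := by
    rw [pow_right_comm, (odd_two_mul_add_one m).neg_one_pow]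
  rw [det_of_pow_mul_eq_prod_Ico, prod_Ico_one_two_mul_add_one, prod_congr rfl hpair,
    prod_mul_distrib, prod_pow_eq_pow_sum, prod_pow, mul_pow, hsign]

end CommRing

theorem stmt7_general (ℓ : ℕ) (hℓ : ℓ.Prime) (hℓ5 : 5 ≤ ℓ)
    (K : Type*) [Field K]
    (ζ : K) (hζ : IsPrimitiveRoot ζ ℓ) :
    Matrix.det (Matrix.of fun i j : Fin ℓ => ζ ^ ((i : ℕ) * (j : ℕ))) =
      ((-1 : K) ^ ((ℓ - 1) * (ℓ + 1) / 8) *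
        ∏ i ∈ Finset.Icc 1 ((ℓ - 1) / 2), (ζ ^ i - 1)) ^ ℓ := by
  obtain ⟨m, rfl⟩ := hℓ.odd_of_ne_two (by omega)
  have hhalf : (2 * m + 1 - 1) / 2 = m := by omega
  have hsign : (2 * m + 1 - 1) * (2 * m + 1 + 1) / 8 = ∑ d ∈ Icc 1 m, d := by
    have hgauss := sum_Icc_one_id_mul_two m
    rw [Nat.div_eq_of_eq_mul_left (by norm_num)]
    grind
  rw [hhalf, hsign, Matrix.det_of_pow_mul_of_pow_eq_one hζ.pow_eq_one]

/-- Let `ℓ ≥ 5` be a prime and `ζ` a primitive `ℓ`-th root of unity in a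
field `K` whose characteristic does not divide `ℓ`.  Then the determinant of the `ℓ × ℓ`
Vandermonde matrix `V(ζ) = (ζ^{ij})` equals
`((−1)^{(ℓ−1)(ℓ+1)/8} · (ζ−1)(ζ²−1)⋯(ζ^{(ℓ−1)/2}−1))^ℓ`. -/
theorem stmt7 (ℓ : ℕ) (hℓ : ℓ.Prime) (hℓ5 : 5 ≤ ℓ)
    (K : Type*) [Field K] (hchar : ¬ (ringChar K ∣ ℓ))
    (ζ : K) (hζ : IsPrimitiveRoot ζ ℓ) :
    Matrix.det (Matrix.of fun i j : Fin ℓ => ζ ^ ((i : ℕ) * (j : ℕ))) =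
      ((-1 : K) ^ ((ℓ - 1) * (ℓ + 1) / 8) *
        ∏ i ∈ Finset.Icc 1 ((ℓ - 1) / 2), (ζ ^ i - 1)) ^ ℓ :=
  stmt7_general ℓ hℓ hℓ5 K ζ hζ
end

section
/- Let H be a normal subgroup of a finite group H̃ and ℓ a prime. If R is a radical ℓ-subgroup of H, then R̃ := O_ℓ(N_{H̃}(R)) is a radical ℓ-subgroup of H̃ satisfying R̃ ∩ H = R and N_{H̃}(R) = N_{H̃}(R̃). In particular, the map Rad(H̃) → Rad(H), R̃ ↦ R̃ ∩ H, is surjective. -/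
/-- `O_ℓ(G)`: the largest normal `ℓ`-subgroup of `G`. -/
def pRadCore (ℓ : ℕ) (G : Type*) [Group G] : Subgroup G :=
  ⨆ (H : Subgroup G) (_ : H.Normal) (_ : IsPGroup ℓ H), H

/-- `R` is a radical `ℓ`-subgroup of `G`: an `ℓ`-subgroup with `R = O_ℓ(N_G(R))`. -/
def IsRadicalPSubgroup (ℓ : ℕ) {G : Type*} [Group G] (R : Subgroup G) : Prop :=
  IsPGroup ℓ R ∧ R.subgroupOf (Subgroup.normalizer (R : Set G)) = pRadCore ℓ ↥(Subgroup.normalizer (R : Set G))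

/-!
Put `N = N_{H̃}(R)` and `R̃ = O_ℓ(N)`. Since `R` is a normal `ℓ`-subgroup of `N`, `R ≤ R̃`, and
since `R̃ ⊴ N`, `N ≤ N(R̃)`. Conversely `R̃ ∩ H` is an `ℓ`-subgroup of `H`
normalised by `N ∩ H = N_H(R)`, so it lies in `O_ℓ(N_H(R)) = R`; hence `R̃ ∩ H = R`, and since `H`
is normal, `N(R̃)` normalises `R̃ ∩ H = R`. Thus `N(R̃) = N`, which makes `R̃ = O_ℓ(N(R̃))` radical.
-/

open Subgroup

section pRadCore

variable {ℓ : ℕ} {G : Type*} [Group G]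

lemma le_pRadCore {K : Subgroup G} (hK : K.Normal) (hp : IsPGroup ℓ K) : K ≤ pRadCore ℓ G :=
  le_iSup_of_le K <| le_iSup_of_le hK <| le_iSup_of_le hp le_rfl

lemma pRadCore_normal : (pRadCore ℓ G).Normal :=
  @iSup_normal _ _ _ _ fun _ ↦ @iSup_normal _ _ _ _ fun hK ↦ @iSup_normal _ _ _ _ fun _ ↦ hK

lemma isPGroup_pRadCore [Finite G] : IsPGroup ℓ (pRadCore ℓ G) := by
  have hsup : SupClosed {K : Subgroup G | K.Normal ∧ IsPGroup ℓ K} := by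
    rintro K ⟨hK, hKp⟩ L ⟨hL, hLp⟩
    exact ⟨@sup_normal _ _ K L hK hL, hKp.to_sup_of_normal_right hLp⟩
  have hmem := hsup.biSup_mem (Set.toFinite {K : Subgroup G | K.Normal ∧ IsPGroup ℓ K})
    ⟨inferInstance, .of_bot⟩ (f := id) fun K hK ↦ hK
  simp only [id, Set.mem_ofPred_eq, iSup_and] at hmem
  exact hmem.2

end pRadCore

section normalizer

variable {ℓ : ℕ} {G : Type*} [Group G]

lemma le_normalizer_map_pRadCore (N : Subgroup G) :
    N ≤ normalizer ((pRadCore ℓ N).map N.subtype : Set G) := by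
  have : (((pRadCore ℓ N).map N.subtype).subgroupOf N).Normal := by
    rw [← comap_subtype, comap_map_eq_self_of_injective N.subtype_injective]
    exact pRadCore_normal
  exact (normal_subgroupOf_iff_le_normalizer (map_subtype_le _)).mp this

lemma le_map_pRadCore {K N : Subgroup G} (hKN : K ≤ N) (hNK : N ≤ normalizer (K : Set G))
    (hp : IsPGroup ℓ K) : K ≤ (pRadCore ℓ N).map N.subtype := by
  rw [← map_subgroupOf_eq_of_le hKN]
  refine map_mono (le_pRadCore ((normal_subgroupOf_iff_le_normalizer hKN).mpr hNK) ?_)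
  exact hp.comap_subtype

lemma IsRadicalPSubgroup.le_of_normalizer_le {R K : Subgroup G} (hR : IsRadicalPSubgroup ℓ R)
    (hp : IsPGroup ℓ K) (hK : K ≤ normalizer (R : Set G))
    (hRK : normalizer (R : Set G) ≤ normalizer (K : Set G)) : K ≤ R := by
  have := le_map_pRadCore hK hRK hp
  rwa [← hR.2, map_subgroupOf_eq_of_le le_normalizer] at this

lemma isRadicalPSubgroup_map_pRadCore [Finite G] {N : Subgroup G}
    (hN : normalizer ((pRadCore ℓ N).map N.subtype : Set G) = N) :
    IsRadicalPSubgroup ℓ ((pRadCore ℓ N).map N.subtype) := by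
  refine ⟨isPGroup_pRadCore.map _, ?_⟩
  rw [hN, ← comap_subtype, comap_map_eq_self_of_injective N.subtype_injective]

lemma normalizer_le_normalizer_inf_of_normal (K H : Subgroup G) [H.Normal] :
    normalizer (K : Set G) ≤ normalizer ((K ⊓ H : Subgroup G) : Set G) :=
  (le_inf le_rfl le_normalizer_of_normal).trans inf_normalizer_le_normalizer_inf

end normalizer

section normalSubgroup

variable {ℓ : ℕ} {G : Type*} [Group G] [Finite G] {H R : Subgroup G} [H.Normal]

lemma map_pRadCore_normalizer_inf_eq (hRH : R ≤ H) (hrad : IsRadicalPSubgroup ℓ (R.subgroupOf H)) :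
    (pRadCore ℓ (normalizer (R : Set G))).map (normalizer (R : Set G)).subtype ⊓ H = R := by
  set N := normalizer (R : Set G)
  set Rt := (pRadCore ℓ N).map N.subtype
  have hRt : Rt ≤ N := map_subtype_le _
  refine le_antisymm ?_ (le_inf ?_ hRH)
  · have hsub : (Rt ⊓ H).subgroupOf H ≤ R.subgroupOf H := by
      refine hrad.le_of_normalizer_le (isPGroup_pRadCore.map _).to_inf_left.comap_subtype ?_ ?_
      · rw [← subgroupOf_normalizer_eq hRH]
        exact subgroupOf_mono H (inf_le_left.trans hRt)
      · rw [← subgroupOf_normalizer_eq hRH, ← subgroupOf_normalizer_eq inf_le_right]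
        exact subgroupOf_mono H ((le_normalizer_map_pRadCore N).trans
          (normalizer_le_normalizer_inf_of_normal Rt H))
    have := map_mono (f := H.subtype) hsub
    rwa [map_subgroupOf_eq_of_le inf_le_right, map_subgroupOf_eq_of_le hRH] at this
  · exact le_map_pRadCore le_normalizer le_rfl
      (hrad.1.of_equiv (subgroupOfEquivOfLe hRH))

lemma normalizer_map_pRadCore_normalizer (hRH : R ≤ H)
    (hrad : IsRadicalPSubgroup ℓ (R.subgroupOf H)) :
    normalizer (((pRadCore ℓ (normalizer (R : Set G))).map (normalizer (R : Set G)).subtype :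
      Subgroup G) : Set G) = normalizer (R : Set G) := by
  refine le_antisymm ?_ (le_normalizer_map_pRadCore _)
  conv_rhs => rw [← map_pRadCore_normalizer_inf_eq hRH hrad]
  exact normalizer_le_normalizer_inf_of_normal _ H

lemma isRadicalPSubgroup_map_pRadCore_normalizer (hRH : R ≤ H)
    (hrad : IsRadicalPSubgroup ℓ (R.subgroupOf H)) :
    IsRadicalPSubgroup ℓ ((pRadCore ℓ (normalizer (R : Set G))).map (normalizer (R : Set G)).subtype) :=
  isRadicalPSubgroup_map_pRadCore (normalizer_map_pRadCore_normalizer hRH hrad)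

end normalSubgroup

theorem stmt11_general {G : Type*} [Group G] [Fintype G] (ℓ : ℕ)
    (H : Subgroup G) (hH : H.Normal)
    (R : Subgroup G) (hRH : R ≤ H)
    (hrad : IsRadicalPSubgroup ℓ (R.subgroupOf H)) :
    (IsRadicalPSubgroup ℓ ((pRadCore ℓ ↥(Subgroup.normalizer (R : Set G))).map (Subgroup.normalizer (R : Set G)).subtype) ∧
      ((pRadCore ℓ ↥(Subgroup.normalizer (R : Set G))).map (Subgroup.normalizer (R : Set G)).subtype) ⊓ H = R ∧
      (Subgroup.normalizer (R : Set G)) = Subgroup.normalizer (((pRadCore ℓ ↥(Subgroup.normalizer (R : Set G))).map (Subgroup.normalizer (R : Set G)).subtype : Subgroup G) : Set G)) ∧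
    (∀ S : Subgroup G, S ≤ H → IsRadicalPSubgroup ℓ (S.subgroupOf H) →
      ∃ T : Subgroup G, IsRadicalPSubgroup ℓ T ∧ T ⊓ H = S) := by
  refine ⟨⟨isRadicalPSubgroup_map_pRadCore_normalizer hRH hrad,
    map_pRadCore_normalizer_inf_eq hRH hrad, (normalizer_map_pRadCore_normalizer hRH hrad).symm⟩, ?_⟩
  intro S hSH hS
  exact ⟨_, isRadicalPSubgroup_map_pRadCore_normalizer hSH hS, map_pRadCore_normalizer_inf_eq hSH hS⟩

/-- Let `H ⊴ H̃` be finite groups and `ℓ` a prime.  If `R` is a radical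
`ℓ`-subgroup of `H`, then `R̃ := O_ℓ(N_{H̃}(R))` is a radical `ℓ`-subgroup of `H̃` with
`R̃ ∩ H = R` and `N_{H̃}(R) = N_{H̃}(R̃)`.  In particular the map `Rad(H̃) → Rad(H)`,
`R̃ ↦ R̃ ∩ H`, is surjective. -/
theorem stmt11 {G : Type*} [Group G] [Fintype G] (ℓ : ℕ) (hℓ : ℓ.Prime)
    (H : Subgroup G) (hH : H.Normal)
    (R : Subgroup G) (hRH : R ≤ H)
    (hrad : IsRadicalPSubgroup ℓ (R.subgroupOf H)) :
    (IsRadicalPSubgroup ℓ ((pRadCore ℓ ↥(Subgroup.normalizer (R : Set G))).map (Subgroup.normalizer (R : Set G)).subtype) ∧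
      ((pRadCore ℓ ↥(Subgroup.normalizer (R : Set G))).map (Subgroup.normalizer (R : Set G)).subtype) ⊓ H = R ∧
      (Subgroup.normalizer (R : Set G)) = Subgroup.normalizer (((pRadCore ℓ ↥(Subgroup.normalizer (R : Set G))).map (Subgroup.normalizer (R : Set G)).subtype : Subgroup G) : Set G)) ∧
    (∀ S : Subgroup G, S ≤ H → IsRadicalPSubgroup ℓ (S.subgroupOf H) →
      ∃ T : Subgroup G, IsRadicalPSubgroup ℓ T ∧ T ⊓ H = S) :=
  stmt11_general ℓ H hH R hRH hrad
end

section
/- Let H ⊴ H̃ be finite groups, ℓ a prime, and let R̃ be a radical ℓ-subgroup of H̃ which is special with respect to H, meaning R̃ = O_ℓ(N_{H̃}(R̃ ∩ H)). Set R = R̃ ∩ H. Then the number of H-conjugacy classes of subgroups of H contained in the set { H ∩ R̃^g : g ∈ H̃ } equals the index |H̃ : H·N_{H̃}(R̃)|. -/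
/-- The conjugate `g K g⁻¹` of a subgroup. -/
def conjSubgroup {G : Type*} [Group G] (g : G) (K : Subgroup G) : Subgroup G :=
  K.map (MulAut.conj g).toMonoidHom

/-!
Write `R = R̃ ∩ H`. Since `R̃ = O_ℓ(N(R))` is normal in `N(R)`, we get `N(R) ≤ N(R̃)`, and since `H`
is normal, `N(R̃) ≤ N(R)`; so `N(R) = N(R̃)`. The groups `H ∩ R̃^g = R^g` form the orbit of `R`
under conjugation by `H̃`, with stabilizer `N(R̃)`. The `H`-orbits on it are the double cosets
`H \ H̃ / N(R̃)`, and as `H` is normal these are the cosets of `H N(R̃)`.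
-/

open MulAction Pointwise Subgroup

instance pRadCore_normal_s12 (ℓ : ℕ) (G : Type*) [Group G] : (pRadCore ℓ G).Normal :=
  @iSup_normal _ _ _ _ fun _ => @iSup_normal _ _ _ _ fun hK => @iSup_normal _ _ _ _ fun _ => hK

section OrbitCount

variable {G α : Type*} [Group G] [MulAction G α] (H : Subgroup G) [H.Normal] (x : α)

theorem exists_mem_smul_smul_eq_iff {g₁ g₂ : G} :
    (∃ h ∈ H, h • g₁ • x = g₂ • x) ↔ g₁⁻¹ * g₂ ∈ H ⊔ stabilizer G x := by
  rw [mem_sup_of_normal_left]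
  constructor
  · rintro ⟨h, hh, hx⟩
    refine ⟨g₁⁻¹ * h * g₁, by simpa using Normal.conj_mem ‹_› h hh g₁⁻¹, (h * g₁)⁻¹ * g₂, ?_,
      by group⟩
    rw [mem_stabilizer_iff, mul_smul, ← hx, ← mul_smul h, inv_smul_smul]
  · rintro ⟨a, ha, s, hs, has⟩
    refine ⟨g₁ * a * g₁⁻¹, Normal.conj_mem ‹_› a ha g₁, ?_⟩
    rw [← mul_smul, inv_mul_cancel_right, ← mul_inv_cancel_left g₁ g₂, ← has, ← mul_assoc,
      mul_smul _ s, mem_stabilizer_iff.mp hs]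

theorem card_quot_normal_smul_orbit :
    Nat.card (Quot fun (y₁ y₂ : {y : α // ∃ g : G, y = g • x}) => ∃ h ∈ H, h • (y₁ : α) = y₂) =
      (H ⊔ stabilizer G x).index := by
  rw [index_eq_card]
  refine Nat.card_congr (Equiv.ofBijective
    (Quot.lift (fun y => (y.2.choose : G ⧸ (H ⊔ stabilizer G x))) ?_) ⟨?_, ?_⟩)
  · rintro ⟨_, hy₁⟩ ⟨_, hy₂⟩ hy
    rwa [QuotientGroup.eq, ← exists_mem_smul_smul_eq_iff, ← hy₁.choose_spec, ← hy₂.choose_spec]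
  · intro q₁ q₂
    induction q₁ using Quot.ind with | mk y₁ =>
    induction q₂ using Quot.ind with | mk y₂ =>
    intro hy
    dsimp only at hy
    rw [QuotientGroup.eq, ← exists_mem_smul_smul_eq_iff, ← y₁.2.choose_spec,
      ← y₂.2.choose_spec] at hy
    exact Quot.sound hy
  · intro q
    induction q using QuotientGroup.induction_on with | H g =>
    have hy : ∃ g' : G, g • x = g' • x := ⟨g, rfl⟩
    refine ⟨Quot.mk _ ⟨g • x, hy⟩, ?_⟩
    dsimp only
    rw [QuotientGroup.eq, ← exists_mem_smul_smul_eq_iff, ← hy.choose_spec]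
    exact ⟨1, one_mem H, one_smul G _⟩

end OrbitCount

/-- `g • K = g K g⁻¹`; this is definitionally `conjSubgroup g K`. -/
abbrev conjMulActionSubgroup (G : Type*) [Group G] : MulAction G (Subgroup G) :=
  MulAction.compHom _ (ConjAct.toConjAct : G ≃* ConjAct G).toMonoidHom

attribute [local instance] conjMulActionSubgroup

section Normalizer

variable {G : Type*} [Group G]

theorem stabilizer_subgroup_eq_normalizer (K : Subgroup G) :
    stabilizer G K = normalizer (K : Set G) := by
  ext g
  exact conjAct_pointwise_smul_iff

theorem smul_inf_normal (g : G) (K : Subgroup G) {H : Subgroup G} (hH : H.Normal) :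
    g • (K ⊓ H) = g • K ⊓ H :=
  (smul_inf (ConjAct.toConjAct g) K H).trans (congrArg _ (hH.conjAct _))

theorem le_normalizer_map_subtype {N : Subgroup G} (K : Subgroup N) [K.Normal] :
    N ≤ normalizer (K.map N.subtype : Set G) := by
  simpa [normalizer_eq_top, ← MonoidHom.range_eq_map] using le_normalizer_map (H := K) N.subtype

theorem normalizer_le_normalizer_inf (R H : Subgroup G) [H.Normal] :
    normalizer (R : Set G) ≤ normalizer ((R ⊓ H : Subgroup G) : Set G) := by
  simpa [normalizer_eq_top] using inf_normalizer_le_normalizer_inf (H := R) (K := H)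

theorem normalizer_inf_eq_normalizer_of_eq_map {R H : Subgroup G} [H.Normal]
    {K : Subgroup (normalizer ((R ⊓ H : Subgroup G) : Set G))} [K.Normal]
    (hR : R = K.map (normalizer ((R ⊓ H : Subgroup G) : Set G)).subtype) :
    normalizer ((R ⊓ H : Subgroup G) : Set G) = normalizer (R : Set G) :=
  le_antisymm ((le_normalizer_map_subtype K).trans_eq (by rw [← hR]))
    (normalizer_le_normalizer_inf R H)

end Normalizer

theorem stmt12_general {G : Type*} [Group G] (ℓ : ℕ)
    (H : Subgroup G) (hH : H.Normal)
    (R' : Subgroup G)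
    (hspec : R' = ((pRadCore ℓ ↥(Subgroup.normalizer ((R' ⊓ H : Subgroup G) : Set G))).map (Subgroup.normalizer ((R' ⊓ H : Subgroup G) : Set G)).subtype)) :
    Nat.card (Quot (fun (K₁ K₂ : {K : Subgroup G // ∃ g : G, K = conjSubgroup g R' ⊓ H}) =>
        ∃ h ∈ H, conjSubgroup h (K₁ : Subgroup G) = (K₂ : Subgroup G))) =
      (H ⊔ Subgroup.normalizer (R' : Set G)).index := by
  have hconj (g : G) : conjSubgroup g R' ⊓ H = g • (R' ⊓ H) := (smul_inf_normal g R' hH).symm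
  rw [← normalizer_inf_eq_normalizer_of_eq_map hspec,
    ← stabilizer_subgroup_eq_normalizer, ← card_quot_normal_smul_orbit]
  exact Nat.card_congr (Quot.congr (Equiv.subtypeEquivRight fun K => by simp only [hconj])
    fun _ _ => Iff.rfl)

/-- Let `H ⊴ H̃` be finite groups, `ℓ` a prime, and `R̃` a radical
`ℓ`-subgroup of `H̃` which is special with respect to `H`, i.e.
`R̃ = O_ℓ(N_{H̃}(R̃ ∩ H))`.  Then the number of `H`-conjugacy classes of subgroups of `H`
contained in `{ H ∩ R̃^g : g ∈ H̃ }` equals `|H̃ : H · N_{H̃}(R̃)|`. -/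
theorem stmt12 {G : Type*} [Group G] [Fintype G] (ℓ : ℕ) (hℓ : ℓ.Prime)
    (H : Subgroup G) (hH : H.Normal)
    (R' : Subgroup G) (hrad : IsRadicalPSubgroup ℓ R')
    (hspec : R' = ((pRadCore ℓ ↥(Subgroup.normalizer ((R' ⊓ H : Subgroup G) : Set G))).map (Subgroup.normalizer ((R' ⊓ H : Subgroup G) : Set G)).subtype)) :
    Nat.card (Quot (fun (K₁ K₂ : {K : Subgroup G // ∃ g : G, K = conjSubgroup g R' ⊓ H}) =>
        ∃ h ∈ H, conjSubgroup h (K₁ : Subgroup G) = (K₂ : Subgroup G))) =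
      (H ⊔ Subgroup.normalizer (R' : Set G)).index :=
  stmt12_general ℓ H hH R' hspec
end

section
/- Let X be a finite group with normal subgroups Y ≤ H ≤ X. Let χ ∈ Irr(X) and let ξ ∈ Irr(Y) be a constituent of the restriction of χ to Y. If Res^X_Y(χ) is multiplicity-free, then there is exactly one irreducible character of H that lies below χ and above ξ; that is, |Irr(H | χ) ∩ Irr(H | ξ)| = 1. -/
/-!
Write `Res^X_H χ = θ₁ + ⋯ + θᵣ` as a sum of irreducible characters of `H`, repetitions allowed.
Each `⟨Res^H_Y θᵢ, ξ⟩` is the dimension `mᵢ` of a space of intertwiners, a natural number, and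
restricting further to `Y` gives `m₁ + ⋯ + mᵣ = ⟨Res^X_Y χ, ξ⟩ = 1` by multiplicity-freeness.
Hence exactly one `θᵢ` lies above `ξ`, and by orthogonality the irreducible characters below `χ`
are exactly the `θᵢ`.
-/

open CategoryTheory
open scoped Classical

/-- `f` is an irreducible complex character of the group `H`. -/
def IsIrrChar (H : Type) [Group H] (f : H → ℂ) : Prop :=
  ∃ V : FDRep ℂ H, Simple V ∧ f = V.character

theorem LinearMap.trace_restrict_eq_mul_finrank {K V : Type*} [Field K] [AddCommGroup V]
    [Module K V] {p : Submodule K V} [FiniteDimensional K p] {g : Module.End K V}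
    (hg : Set.MapsTo g p p) {c : K} (hc : ∀ v ∈ p, g v = c • v) :
    trace K p (g.restrict hg) = c * Module.finrank K p := by
  have : g.restrict hg = c • 1 := by
    ext ⟨v, hv⟩
    exact hc v hv
  rw [this, map_smul, trace_one, smul_eq_mul]

-- A finite-order endomorphism is diagonalizable with roots of unity as eigenvalues, and `μ⁻¹ = μ̄`.
theorem Module.End.trace_inv_eq_conj {V : Type*} [AddCommGroup V] [Module ℂ V]
    [FiniteDimensional ℂ V] {f : (Module.End ℂ V)ˣ} (hf : IsOfFinOrder f) :
    LinearMap.trace ℂ V ↑f⁻¹ = starRingEnd ℂ (LinearMap.trace ℂ V f) := by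
  obtain ⟨n, hn, hfn⟩ := hf.exists_pow_eq_one
  replace hfn : (f : Module.End ℂ V) ^ n = 1 := by
    rw [← Units.val_pow_eq_pow_val, hfn, Units.val_one]
  have hss : (f : Module.End ℂ V).IsSemisimple :=
    isSemisimple_of_squarefree_aeval_eq_zero
      (Polynomial.X_pow_sub_one_separable_iff.mpr (by exact_mod_cast hn.ne')).squarefree
      (by simp [hfn])
  set E := (f : Module.End ℂ V).eigenspace
  have hint : DirectSum.IsInternal E :=
    DirectSum.isInternal_submodule_of_iSupIndep_of_iSup_eq_top
      (eigenspaces_iSupIndep _) hss.iSup_eigenspace_eq_top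
  have hfin : {μ | E μ ≠ ⊥}.Finite :=
    WellFoundedGT.finite_ne_bot_of_iSupIndep (eigenspaces_iSupIndep _)
  have hmaps (g : (Module.End ℂ V)ˣ) (hg : Commute (f : Module.End ℂ V) g) (μ : ℂ) :
      Set.MapsTo (g : Module.End ℂ V) (E μ : Set V) (E μ) :=
    mapsTo_genEigenspace_of_comm hg μ 1
  rw [LinearMap.trace_eq_sum_trace_restrict' hint hfin (hmaps f (Commute.refl _)),
    LinearMap.trace_eq_sum_trace_restrict' hint hfin
      (hmaps f⁻¹ (Commute.units_inv_right (Commute.refl _))), map_sum]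
  refine Finset.sum_congr rfl fun μ hμ => ?_
  obtain ⟨v, hv⟩ : ∃ v, (f : Module.End ℂ V).HasEigenvector μ v :=
    HasEigenvalue.exists_hasEigenvector (by simpa [hasEigenvalue_iff] using hμ)
  have hμn : μ ^ n = 1 := by
    have := hv.pow_apply n
    rw [hfn, one_apply] at this
    exact smul_left_injective ℂ hv.2 (by simpa using this.symm)
  have hμ0 : μ ≠ 0 := by rintro rfl; simp [zero_pow hn.ne'] at hμn
  have hf_inv (w : V) (hw : w ∈ E μ) : (↑f⁻¹ : Module.End ℂ V) w = μ⁻¹ • w := by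
    rw [eq_inv_smul_iff₀ hμ0, ← map_smul, ← mem_eigenspace_iff.mp hw, ← mul_apply,
      Units.inv_mul, one_apply]
  rw [LinearMap.trace_restrict_eq_mul_finrank _ fun w hw => mem_eigenspace_iff.mp hw,
    LinearMap.trace_restrict_eq_mul_finrank _ hf_inv, map_mul, map_natCast,
    ← Complex.inv_eq_conj (Complex.norm_eq_one_of_pow_eq_one hμn hn.ne')]

theorem Subrepresentation.isCompl_toSubmodule {A G W : Type*} [Semiring A] [Monoid G]
    [AddCommMonoid W] [Module A W] {ρ : Representation A G W} {p q : Subrepresentation ρ}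
    (h : IsCompl p q) : IsCompl p.toSubmodule q.toSubmodule :=
  .of_eq (by rw [← toSubmodule_inf, h.inf_eq_bot]; rfl)
    (by rw [← toSubmodule_sup, h.sup_eq_top]; rfl)

theorem Fintype.sum_list_sum_map_apply_mul {ι α β R : Type*} [Fintype ι] [CommSemiring R]
    (L : List β) (F : β → α → R) (ψ : ι → α) (c : ι → R) :
    ∑ x, (L.map F).sum (ψ x) * c x = (L.map fun b => ∑ x, F b (ψ x) * c x).sum := by
  induction L with
  | nil => simp
  | cons b L ih => simp [add_mul, Finset.sum_add_distrib, ih]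

theorem List.existsUnique_of_sum_map_eq_one {α : Type*} {L : List α} {m : α → ℕ}
    (h : (L.map m).sum = 1) : ∃! a, a ∈ L ∧ m a ≠ 0 := by
  obtain ⟨a, ha, hma⟩ : ∃ a ∈ L, m a ≠ 0 := by
    by_contra! h0
    rw [List.sum_eq_zero (l := L.map m) (by simpa using h0)] at h
    exact zero_ne_one h
  refine ⟨a, ⟨ha, hma⟩, fun b ⟨hb, hmb⟩ => by_contra fun hba => ?_⟩
  have hsplit : (L.map m).sum = m b + ((L.erase b).map m).sum := by
    simp [((List.perm_cons_erase hb).map m).sum_eq]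
  have hle : m a ≤ ((L.erase b).map m).sum :=
    List.single_le_sum (fun _ _ => Nat.zero_le _) _
      (List.mem_map_of_mem ((List.mem_erase_of_ne (Ne.symm hba)).mpr ha))
  omega

theorem List.sum_map_ite_natCast_ne_zero_iff {α R : Type*} [AddMonoidWithOne R] [CharZero R]
    {L : List α} {p : α → Prop} [DecidablePred p] {N : ℕ} (hN : N ≠ 0) :
    (L.map fun a => if p a then (N : R) else 0).sum ≠ 0 ↔ ∃ a ∈ L, p a := by
  have : (L.map fun a => if p a then (N : R) else 0) =
      (L.map fun a => if p a then N else 0).map Nat.cast := by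
    simp [Function.comp_def, apply_ite]
  rw [this, ← Nat.cast_list_sum, Nat.cast_ne_zero, Ne, List.sum_eq_zero_iff]
  simp [hN]

namespace Representation

variable {G : Type} [Group G] {V : Type} [AddCommGroup V] [Module ℂ V]

theorem exists_ne_bot_ne_top_of_not_isIrreducible [Nontrivial V] {ρ : Representation ℂ G V}
    (h : ¬ ρ.IsIrreducible) : ∃ p : Subrepresentation ρ, p ≠ ⊥ ∧ p ≠ ⊤ := by
  simp only [isSimpleOrder_iff, not_and, not_forall, not_or] at h
  exact h ⟨⊥, ⊤, fun h => bot_ne_top (congrArg Subrepresentation.toSubmodule h)⟩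

variable [FiniteDimensional ℂ V]

theorem char_inv_eq_conj [Finite G] (ρ : Representation ℂ G V) (g : G) :
    ρ.character g⁻¹ = starRingEnd ℂ (ρ.character g) := by
  have := Module.End.trace_inv_eq_conj (ρ.asGroupHom.isOfFinOrder (isOfFinOrder_of_finite g))
  rwa [← map_inv, asGroupHom_apply, asGroupHom_apply] at this

theorem sum_char_mul_conj_char_eq_finrank [Fintype G] {W : Type} [AddCommGroup W] [Module ℂ W]
    [FiniteDimensional ℂ W] (ρ : Representation ℂ G V) (σ : Representation ℂ G W) :
    ∑ g, σ.character g * starRingEnd ℂ (ρ.character g) =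
      Nat.card G * Module.finrank ℂ (IntertwiningMap ρ σ) := by
  have hG : (Nat.card G : ℂ) ≠ 0 := Nat.cast_ne_zero.mpr Nat.card_pos.ne'
  have := invertibleOfNonzero hG
  simp_rw [← char_inv_eq_conj, ← card_inv_mul_sum_char_mul_char_eq_finrank ρ σ,
    mul_inv_cancel_left₀ hG]

theorem char_eq_add_of_isCompl {ρ : Representation ℂ G V} {p q : Subrepresentation ρ}
    (h : IsCompl p q) :
    ρ.character = p.toRepresentation.character + q.toRepresentation.character := by
  ext g
  let N : Bool → Submodule ℂ V := fun b => bif b then p.toSubmodule else q.toSubmodule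
  have hN : DirectSum.IsInternal N :=
    (DirectSum.isInternal_submodule_iff_isCompl N (i := true) (j := false) (by simp)
      (by ext b; cases b <;> simp)).mpr (Subrepresentation.isCompl_toSubmodule h)
  have := LinearMap.trace_eq_sum_trace_restrict hN (f := ρ g) fun b => by
    cases b
    · exact q.apply_mem_toSubmodule g
    · exact p.apply_mem_toSubmodule g
  rwa [Fintype.sum_bool] at this

end Representation

namespace FDRep

variable {G : Type} [Group G] [Fintype G]

theorem char_inv_eq_conj (V : FDRep ℂ G) (g : G) :
    V.character g⁻¹ = starRingEnd ℂ (V.character g) :=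
  Representation.char_inv_eq_conj V.ρ g

theorem simple_of_isIrreducible {V : Type} [AddCommGroup V] [Module ℂ V] [FiniteDimensional ℂ V]
    (ρ : Representation ℂ G V) [ρ.IsIrreducible] : Simple (FDRep.of ρ) := by
  have hG : (Nat.card G : ℂ) ≠ 0 := Nat.cast_ne_zero.mpr Nat.card_pos.ne'
  have := invertibleOfNonzero hG
  have h := ρ.card_inv_mul_sum_char_mul_char_eq_finrank ρ
  rw [Representation.IsIrreducible.finrank_intertwiningMap_self, Nat.cast_one,
    inv_mul_eq_one₀ hG] at h
  exact (simple_iff_char_is_norm_one _).mpr h.symm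

theorem sum_char_mul_conj_char_of_simple (V W : FDRep ℂ G) [Simple V] [Simple W] :
    ∑ g, V.character g * starRingEnd ℂ (W.character g) =
      if V.character = W.character then (Nat.card G : ℂ) else 0 := by
  simp_rw [← char_inv_eq_conj]
  split_ifs with h
  · rw [← h]
    exact (simple_iff_char_is_norm_one V).mp ‹_›
  · have hG : (Nat.card G : ℂ) ≠ 0 := Nat.cast_ne_zero.mpr Nat.card_pos.ne'
    have := invertibleOfNonzero hG
    have h' := char_orthonormal V W
    rw [if_neg fun ⟨i⟩ => h (char_iso i), mul_eq_zero] at h'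
    exact h'.resolve_left (inv_ne_zero hG)

theorem sum_list_sum_char_mul_conj_char_ne_zero_iff {L : List (FDRep ℂ G)}
    (hL : ∀ W ∈ L, Simple W) (U : FDRep ℂ G) [Simple U] :
    ∑ g, (L.map character).sum g * starRingEnd ℂ (U.character g) ≠ 0 ↔
      ∃ W ∈ L, W.character = U.character := by
  rw [Fintype.sum_list_sum_map_apply_mul L character fun g => g,
    List.map_congr_left fun W hW => have := hL W hW; sum_char_mul_conj_char_of_simple W U]
  exact List.sum_map_ite_natCast_ne_zero_iff Nat.card_pos.ne'

end FDRep

namespace Representation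

variable {G : Type} [Group G] [Fintype G] {V : Type} [AddCommGroup V] [Module ℂ V]
  [FiniteDimensional ℂ V]

theorem exists_char_eq_sum_simple (ρ : Representation ℂ G V) :
    ∃ L : List (FDRep ℂ G), (∀ W ∈ L, Simple W) ∧ ρ.character = (L.map FDRep.character).sum := by
  induction hn : Module.finrank ℂ V using Nat.strong_induction_on generalizing V with
  | _ n ih =>
  rcases subsingleton_or_nontrivial V with hV | hV
  · refine ⟨[], by simp, ?_⟩
    ext g
    simp [character, Subsingleton.elim (ρ g) 0]
  by_cases hirr : ρ.IsIrreducible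
  · exact ⟨[FDRep.of ρ], by simpa using FDRep.simple_of_isIrreducible ρ, by simp; rfl⟩
  obtain ⟨p, hp_bot, hp_top⟩ := exists_ne_bot_ne_top_of_not_isIrreducible hirr
  obtain ⟨q, hpq⟩ := exists_isCompl p
  have hq_top : q ≠ ⊤ := hpq.disjoint.ne_top_of_ne_bot hp_bot
  have hlt {r : Subrepresentation ρ} (hr : r ≠ ⊤) : Module.finrank ℂ r.toSubmodule < n :=
    hn ▸ Submodule.finrank_lt fun h => hr (Subrepresentation.toSubmodule_injective h)
  obtain ⟨L₁, hL₁, hρ₁⟩ := ih _ (hlt hp_top) p.toRepresentation rfl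
  obtain ⟨L₂, hL₂, hρ₂⟩ := ih _ (hlt hq_top) q.toRepresentation rfl
  refine ⟨L₁ ++ L₂, fun W hW => (List.mem_append.mp hW).elim (hL₁ W) (hL₂ W), ?_⟩
  rw [char_eq_add_of_isCompl hpq, hρ₁, hρ₂, List.map_append, List.sum_append]

theorem existsUnique_isIrrChar_below_above {K : Type} [Group K] [Fintype K]
    (ρ : Representation ℂ G V) (φ : K →* G) (Ξ : FDRep ℂ K)
    (hmult : ∑ k, ρ.character (φ k) * starRingEnd ℂ (Ξ.character k) = Nat.card K) :
    ∃! θ : G → ℂ, IsIrrChar G θ ∧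
      ∑ g, ρ.character g * starRingEnd ℂ (θ g) ≠ 0 ∧
      ∑ k, θ (φ k) * starRingEnd ℂ (Ξ.character k) ≠ 0 := by
  obtain ⟨L, hL, hρ⟩ := ρ.exists_char_eq_sum_simple
  let m (W : FDRep ℂ G) : ℕ := Module.finrank ℂ (IntertwiningMap Ξ.ρ (W.ρ.comp φ))
  have hm (W : FDRep ℂ G) :
      ∑ k, W.character (φ k) * starRingEnd ℂ (Ξ.character k) = Nat.card K * m W :=
    sum_char_mul_conj_char_eq_finrank Ξ.ρ (W.ρ.comp φ)
  have hsum : (L.map m).sum = 1 := by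
    rw [hρ, Fintype.sum_list_sum_map_apply_mul] at hmult
    simp only [hm, List.sum_map_mul_left] at hmult
    have : (((L.map m).sum : ℕ) : ℂ) = 1 := by
      simpa [Nat.cast_list_sum, Function.comp_def] using
        mul_eq_left₀ (Nat.cast_ne_zero.mpr Nat.card_pos.ne') |>.mp hmult
    exact_mod_cast this
  have hbelow (U : FDRep ℂ G) [Simple U] :
      ∑ g, ρ.character g * starRingEnd ℂ (U.character g) ≠ 0 ↔
        ∃ W ∈ L, W.character = U.character :=
    hρ ▸ FDRep.sum_list_sum_char_mul_conj_char_ne_zero_iff hL U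
  obtain ⟨W₀, ⟨hW₀, hmW₀⟩, huniq⟩ := List.existsUnique_of_sum_map_eq_one hsum
  have hW₀_simple := hL W₀ hW₀
  refine ⟨W₀.character, ⟨⟨W₀, hW₀_simple, rfl⟩, (hbelow W₀).mpr ⟨W₀, hW₀, rfl⟩, ?_⟩, ?_⟩
  · simpa [hm, Nat.card_pos.ne'] using hmW₀
  rintro _ ⟨⟨U, hU, rfl⟩, hρU, hUΞ⟩
  obtain ⟨W, hW, hWU⟩ := (hbelow U).mp hρU
  obtain rfl := huniq W ⟨hW, by simpa [← hWU, hm] using hUΞ⟩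
  exact hWU.symm

end Representation

theorem stmt14_general {X : Type} [Group X] [Fintype X]
    (Y H : Subgroup X) (hYH : Y ≤ H)
    (χ : X → ℂ) (hχ : IsIrrChar X χ)
    (ξ : ↥Y → ℂ) (hξ : IsIrrChar ↥Y ξ)
    (hconst : ∑ y : ↥Y, χ (y : X) * (starRingEnd ℂ) (ξ y) ≠ 0)
    (hmf : ∀ g : ↥Y → ℂ, IsIrrChar ↥Y g →
      (∑ y : ↥Y, χ (y : X) * (starRingEnd ℂ) (g y)) = 0 ∨
      (∑ y : ↥Y, χ (y : X) * (starRingEnd ℂ) (g y)) = (Nat.card ↥Y : ℂ)) :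
    ∃! f : ↥H → ℂ, IsIrrChar ↥H f ∧
      (∑ h : ↥H, χ (h : X) * (starRingEnd ℂ) (f h)) ≠ 0 ∧
      (∑ y : ↥Y, f (Subgroup.inclusion hYH y) * (starRingEnd ℂ) (ξ y)) ≠ 0 := by
  obtain ⟨V, -, rfl⟩ := hχ
  obtain ⟨Ξ, hΞ, rfl⟩ := hξ
  exact Representation.existsUnique_isIrrChar_below_above (V.ρ.comp H.subtype)
    (Subgroup.inclusion hYH) Ξ ((hmf _ ⟨Ξ, hΞ, rfl⟩).resolve_left hconst)

/-- Let `X` be a finite group with normal subgroups `Y ≤ H ≤ X`, let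
`χ ∈ Irr(X)` and let `ξ ∈ Irr(Y)` be a constituent of `Res^X_Y χ`.  If `Res^X_Y χ` is
multiplicity free, then there is exactly one irreducible character of `H` lying below `χ`
and above `ξ`.  Constituency is expressed via nonvanishing of the relevant inner products
of characters, and multiplicity freeness via all multiplicities being `0` or `1`. -/
theorem stmt14 {X : Type} [Group X] [Fintype X]
    (Y H : Subgroup X) (hY : Y.Normal) (hH : H.Normal) (hYH : Y ≤ H)
    (χ : X → ℂ) (hχ : IsIrrChar X χ)
    (ξ : ↥Y → ℂ) (hξ : IsIrrChar ↥Y ξ)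
    (hconst : ∑ y : ↥Y, χ (y : X) * (starRingEnd ℂ) (ξ y) ≠ 0)
    (hmf : ∀ g : ↥Y → ℂ, IsIrrChar ↥Y g →
      (∑ y : ↥Y, χ (y : X) * (starRingEnd ℂ) (g y)) = 0 ∨
      (∑ y : ↥Y, χ (y : X) * (starRingEnd ℂ) (g y)) = (Nat.card ↥Y : ℂ)) :
    ∃! f : ↥H → ℂ, IsIrrChar ↥H f ∧
      (∑ h : ↥H, χ (h : X) * (starRingEnd ℂ) (f h)) ≠ 0 ∧
      (∑ y : ↥Y, f (Subgroup.inclusion hYH y) * (starRingEnd ℂ) (ξ y)) ≠ 0 :=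
  stmt14_general Y H hYH χ hχ ξ hξ hconst hmf
end

section
/- Let A = XY be a finite group with X ⊴ A and Z := X ∩ Y ⊆ Z(X). Suppose χ ∈ Irr(X) is A-invariant, ζ ∈ Irr(Y) is a linear character, and Irr(Z | χ) = Irr(Z | ζ) (i.e., χ and ζ lie over the same character of Z). If χ̃ ∈ Irr(X ⋊ (Y/Z)) is an extension of χ, then the function χ̃·ζ on A defined by (χ̃·ζ)(xy) = χ̃(x, yZ)·ζ(y) for x ∈ X, y ∈ Y is a well-defined irreducible character of A extending χ. -/
/-!
Work on the semidirect product `P = X ⋊ Y`, which maps onto `A` by `(x, y) ↦ xy` and onto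
`X ⋊ (Y/Z)`. On `P`, `(x, y) ↦ ζ(y) χ̃(x, yZ)` is afforded by a representation; it descends to
`A` because the kernel of `P → A` consists of the pairs `(z⁻¹, z)` with `z ∈ Z`, on which `χ̃`
acts through the scalar `ζ(z)⁻¹`. That `χ̃` is scalar on `Z` comes from Schur's lemma applied to
the averaging operator `∑_{z ∈ Z} ζ(z)⁻¹ χ̃(z)`: it commutes with `X ⋊ (Y/Z)` because `Z` is
central in `X` and `ζ` is a class function on `Y`, and its trace is `|Z| χ(1) ≠ 0`.
Irreducibility transfers because `A` and `X ⋊ (Y/Z)` act through the same operators up to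
nonzero scalars, so the two representations have the same commutant.
-/

open CategoryTheory
open scoped Classical

namespace Representation

variable {k G K M : Type*} [Field k] [Group G] [Group K] [AddCommGroup M] [Module k M]

def twist (ρ : Representation k G M) (θ : G →* k) : Representation k G M where
  toFun g := θ g • ρ g
  map_one' := by simp
  map_mul' g h := by simp only [map_mul, smul_mul_smul_comm]

@[simp]
lemma twist_apply (ρ : Representation k G M) (θ : G →* k) (g : G) : ρ.twist θ g = θ g • ρ g :=
  rfl

variable [Fintype K] (ρ : Representation k G M) (ι : K →* G) (θ : K →* k)

/-- `|K|` times the projection onto the subspace on which `K` acts through `θ`. -/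
def eigenAverage : M →ₗ[k] M := ∑ κ, θ κ⁻¹ • ρ (ι κ)

lemma ρ_mul_eigenAverage (κ : K) : ρ (ι κ) * ρ.eigenAverage ι θ = θ κ • ρ.eigenAverage ι θ := by
  rw [eigenAverage, Finset.mul_sum, Finset.smul_sum]
  refine Fintype.sum_equiv (Equiv.mulLeft κ) _ _ fun κ' => ?_
  have hθ : θ κ * θ (κ * κ')⁻¹ = θ κ'⁻¹ := by
    rw [mul_inv_rev, map_mul, mul_left_comm, ← map_mul, mul_inv_cancel, map_one, mul_one]
  rw [Equiv.coe_mulLeft, mul_smul_comm, ← map_mul, ← map_mul, smul_smul, hθ]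

lemma commute_eigenAverage (g : G) (e : K ≃* K) (he : ∀ κ, ι (e κ) = g * ι κ * g⁻¹)
    (hθ : ∀ κ, θ (e κ) = θ κ) : Commute (ρ g) (ρ.eigenAverage ι θ) := by
  rw [Commute, SemiconjBy, eigenAverage, Finset.mul_sum, Finset.sum_mul]
  refine Fintype.sum_equiv e.toEquiv _ _ fun κ => ?_
  rw [MulEquiv.toEquiv_eq_coe, MulEquiv.coe_toEquiv, mul_smul_comm, smul_mul_assoc, ← map_mul,
    ← map_mul, ← map_inv e, hθ, he, inv_mul_cancel_right]

lemma trace_eigenAverage (hχ : ∀ κ, LinearMap.trace k M (ρ (ι κ)) = θ κ * Module.finrank k M) :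
    LinearMap.trace k M (ρ.eigenAverage ι θ) = Fintype.card K * Module.finrank k M := by
  simp only [eigenAverage, map_sum, map_smul, hχ, smul_eq_mul, ← mul_assoc, ← map_mul,
    inv_mul_cancel, map_one, one_mul, Finset.sum_const, Finset.card_univ, nsmul_eq_mul]

end Representation

namespace FDRep

variable {k G H K : Type} [Field k] [Group G] [Group H] [Group K]

lemma nontrivial_of_simple (V : FDRep k G) [Simple V] : Nontrivial V := by
  by_contra h
  rw [not_nontrivial_iff_subsingleton] at h
  exact id_nonzero V (Action.hom_ext _ _ (by ext v; exact Subsingleton.elim _ _))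

def endMk (V : FDRep k G) (f : V →ₗ[k] V) (hf : ∀ g, Commute f (V.ρ g)) : V ⟶ V where
  hom := FGModuleCat.ofHom f
  comm g := by ext v; exact LinearMap.congr_fun (hf g) v

variable [IsAlgClosed k]

lemma exists_eq_smul_one_of_commute (V : FDRep k G) [Simple V] (f : V →ₗ[k] V)
    (hf : ∀ g, Commute f (V.ρ g)) : ∃ c : k, f = c • 1 := by
  obtain ⟨c, hc⟩ := endomorphism_simple_eq_smul_id k (V.endMk f hf)
  exact ⟨c, by ext v; exact (congrArg (fun φ : V ⟶ V => φ.hom.hom.hom v) hc).symm⟩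

lemma simple_of_commutant_le [Finite H] [NeZero (Nat.card H : k)] (V : FDRep k G) [Simple V]
    (σ : Representation k H V)
    (h : ∀ f : V →ₗ[k] V, (∀ x, Commute f (σ x)) → ∀ g, Commute f (V.ρ g)) :
    Simple (FDRep.of σ) := by
  have := V.nontrivial_of_simple
  rw [simple_iff_end_is_rank_one, finrank_eq_one_iff']
  refine ⟨𝟙 _, fun h0 => ?_, fun φ => ?_⟩
  · obtain ⟨v, hv⟩ := exists_ne (0 : V)
    exact hv (congrArg (fun φ : FDRep.of σ ⟶ FDRep.of σ => φ.hom.hom.hom v) h0)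
  · obtain ⟨c, hc⟩ := V.exists_eq_smul_one_of_commute φ.hom.hom.hom
      (h _ fun x => LinearMap.ext fun v => congrArg (fun ψ => ψ.hom.hom v) (φ.comm x))
    exact ⟨c, by ext v; exact (LinearMap.congr_fun hc v).symm⟩

lemma ρ_eq_smul_one_of_character_eq [CharZero k] [Fintype K] (V : FDRep k G) [Simple V]
    (ι : K →* G) (θ : K →* k)
    (hcomm : ∀ g, Commute (V.ρ g) (Representation.eigenAverage V.ρ ι θ))
    (hχ : ∀ κ, V.character (ι κ) = θ κ * Module.finrank k V) (κ : K) :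
    V.ρ (ι κ) = θ κ • 1 := by
  have := V.nontrivial_of_simple
  obtain ⟨c, hc⟩ := V.exists_eq_smul_one_of_commute _ fun g => (hcomm g).symm
  have hc0 : c ≠ 0 := by
    rintro rfl
    have htr := Representation.trace_eigenAverage V.ρ ι θ hχ
    rw [hc, zero_smul, map_zero, eq_comm] at htr
    exact mul_ne_zero (Nat.cast_ne_zero.mpr Fintype.card_ne_zero)
      (Nat.cast_ne_zero.mpr Module.finrank_pos.ne') htr
  have key := Representation.ρ_mul_eigenAverage V.ρ ι θ κ
  rw [hc, mul_smul_comm, mul_one, smul_comm] at key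
  exact smul_right_injective _ hc0 key

end FDRep

lemma MonoidHom.exists_comp_eq_of_ker_le {G H M : Type*} [Group G] [Group H] [Monoid M]
    {f : G →* H} (hf : Function.Surjective f) {g : G →* M} (hg : f.ker ≤ g.ker) :
    ∃ h : H →* M, h.comp f = g := by
  refine ⟨(QuotientGroup.lift f.ker g hg).comp
    (QuotientGroup.quotientKerEquivOfSurjective f hf).symm.toMonoidHom, MonoidHom.ext fun x => ?_⟩
  have hx : (QuotientGroup.quotientKerEquivOfSurjective f hf).symm (f x) = x :=
    MulEquiv.symm_apply_eq _ |>.mpr rfl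
  simp [hx]

namespace SemidirectProduct

lemma lift_subtype_surjective {A : Type*} [Group A] {X Y : Subgroup A} [X.Normal]
    {φ : Y →* MulAut X}
    (h : ∀ y, X.subtype.comp (φ y).toMonoidHom =
      (MulAut.conj (Y.subtype y)).toMonoidHom.comp X.subtype)
    (hXY : X ⊔ Y = ⊤) : Function.Surjective (lift X.subtype Y.subtype h) := by
  intro a
  obtain ⟨x, hx, y, hy, rfl⟩ := Subgroup.mem_sup_of_normal_left.mp (hXY ▸ Subgroup.mem_top a)
  exact ⟨⟨⟨x, hx⟩, ⟨y, hy⟩⟩, rfl⟩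

end SemidirectProduct

section ExtensionByLinearCharacter

open SemidirectProduct

variable {A : Type} [Group A] {X Y : Subgroup A}

variable (X Y) in
def infToLeft : (X ⊓ Y).subgroupOf Y →* X :=
  (Y.subtype.comp ((X ⊓ Y).subgroupOf Y).subtype).codRestrict X
    fun κ => (Subgroup.mem_subgroupOf.mp κ.2).1

@[simp]
lemma coe_infToLeft (κ : (X ⊓ Y).subgroupOf Y) : ((infToLeft X Y κ : X) : A) = ((κ : Y) : A) :=
  rfl

variable [((X ⊓ Y).subgroupOf Y).Normal] {φ : (Y ⧸ (X ⊓ Y).subgroupOf Y) →* MulAut X}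

variable (φ) in
def quotientHom : X ⋊[φ.comp (QuotientGroup.mk' _)] Y →* X ⋊[φ] (Y ⧸ (X ⊓ Y).subgroupOf Y) :=
  map (MonoidHom.id X) (QuotientGroup.mk' _) fun _ => rfl

variable (ζ : Y →* ℂ) (V : FDRep ℂ (X ⋊[φ] (Y ⧸ (X ⊓ Y).subgroupOf Y)))

lemma simple_of_apply_mul [Fintype A] [Simple V] (ρ : Representation ℂ A V)
    (hρ : ∀ (x : X) (y : Y), ρ (x * y) = ζ y • V.ρ (inl x * inr (y : Y ⧸ (X ⊓ Y).subgroupOf Y))) :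
    Simple (FDRep.of ρ) := by
  refine FDRep.simple_of_commutant_le V _ fun f hf g => ?_
  obtain ⟨y, hy⟩ := QuotientGroup.mk_surjective g.right
  have hfg := hf (g.left * y)
  rw [hρ, hy, inl_left_mul_inr_right] at hfg
  simpa [((Group.isUnit y).map ζ).ne_zero] using hfg.smul_right (ζ y)⁻¹

variable [X.Normal]

lemma infToLeft_conjNormal (y : Y) (κ : (X ⊓ Y).subgroupOf Y) :
    infToLeft X Y (MulAut.conjNormal y κ) = MulAut.conjNormal (y : A) (infToLeft X Y κ) :=
  Subtype.ext (by
    change ((MulAut.conjNormal y κ : Y) : A) = (y : A) * ((κ : Y) : A) * (y : A)⁻¹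
    simp [MulAut.conjNormal_apply])

variable (hφ : ∀ y : Y, φ (QuotientGroup.mk y) = MulAut.conjNormal (y : A))

include hφ in
lemma ρ_inl_infToLeft_eq_smul_one [Fintype A] [Simple V] (hZ : ∀ z ∈ X ⊓ Y, ∀ x ∈ X, z * x = x * z)
    (hV : ∀ κ, V.character (inl (infToLeft X Y κ)) = ζ κ * Module.finrank ℂ V)
    (κ : (X ⊓ Y).subgroupOf Y) : V.ρ (inl (infToLeft X Y κ)) = ζ κ • 1 := by
  refine FDRep.ρ_eq_smul_one_of_character_eq V (inl.comp (infToLeft X Y))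
    (ζ.comp (Subgroup.subtype _)) (fun g => ?_) hV κ
  rw [← inl_left_mul_inr_right g, map_mul]
  refine Commute.mul_left ?_ ?_
  · refine Representation.commute_eigenAverage _ _ _ _ (MulEquiv.refl _) (fun κ => ?_) fun _ => rfl
    have hcomm := hZ _ (Subgroup.mem_subgroupOf.mp κ.2) _ g.left.2
    simp only [MulEquiv.refl_apply, MonoidHom.comp_apply, ← map_inv, ← map_mul]
    congr 1
    exact Subtype.ext (by simp [← hcomm])
  · induction g.right using QuotientGroup.induction_on with | H y => ?_
    refine Representation.commute_eigenAverage _ _ _ _ (MulAut.conjNormal y) (fun κ => ?_)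
      fun κ => ?_
    · rw [MonoidHom.comp_apply, MonoidHom.comp_apply, infToLeft_conjNormal, ← hφ, inl_aut,
        map_inv]
    · rw [MonoidHom.comp_apply, MonoidHom.comp_apply, Subgroup.coe_subtype, MulAut.conjNormal_apply,
        map_mul, map_mul, mul_right_comm, ← map_mul, mul_inv_cancel, map_one, one_mul]

def productHom : X ⋊[φ.comp (QuotientGroup.mk' _)] Y →* A :=
  lift X.subtype Y.subtype fun y => by ext x; simp [hφ, MulAut.conjNormal_apply]

lemma ker_productHom_le_ker_twist (hV : ∀ κ, V.ρ (inl (infToLeft X Y κ)) = ζ κ • 1) :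
    (productHom hφ).ker ≤
      (Representation.twist (V.ρ.comp (quotientHom φ)) (ζ.comp rightHom)).ker := by
  intro p hp
  have hright : ((p.right : Y) : A) = (p.left : A)⁻¹ := eq_inv_of_mul_eq_one_right hp
  have hmem : p.right ∈ (X ⊓ Y).subgroupOf Y := by
    rw [Subgroup.mem_subgroupOf]
    exact ⟨hright ▸ X.inv_mem p.left.2, p.right.2⟩
  set κ : (X ⊓ Y).subgroupOf Y := ⟨p.right, hmem⟩
  have hq : quotientHom φ p = inl (infToLeft X Y κ⁻¹) := by
    ext
    · simp [quotientHom, κ, hright]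
    · exact (QuotientGroup.eq_one_iff _).mpr κ.2
  rw [MonoidHom.mem_ker, Representation.twist_apply, MonoidHom.comp_apply, MonoidHom.comp_apply,
    hq, hV, smul_smul, rightHom_eq_right, ← map_mul, Subgroup.coe_inv, mul_inv_cancel, map_one,
    one_smul]

include hφ in
lemma exists_representation_apply_mul (hV : ∀ κ, V.ρ (inl (infToLeft X Y κ)) = ζ κ • 1)
    (hXY : X ⊔ Y = ⊤) :
    ∃ ρ : Representation ℂ A V, ∀ (x : X) (y : Y),
      ρ (x * y) = ζ y • V.ρ (inl x * inr (y : Y ⧸ (X ⊓ Y).subgroupOf Y)) := by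
  obtain ⟨ρ, hρ⟩ := MonoidHom.exists_comp_eq_of_ker_le (lift_subtype_surjective _ hXY)
    (ker_productHom_le_ker_twist ζ V hφ hV)
  refine ⟨ρ, fun x y => ?_⟩
  have hxy := DFunLike.congr_fun hρ ⟨x, y⟩
  rw [← mk_eq_inl_mul_inr]
  exact hxy

end ExtensionByLinearCharacter

theorem stmt16_general {A : Type} [Group A] [Fintype A]
    (X Y : Subgroup A) [hXn : X.Normal]
    (hA : X ⊔ Y = ⊤)
    (hZ : ∀ z ∈ X ⊓ Y, ∀ x ∈ X, z * x = x * z)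
    [hN : ((X ⊓ Y).subgroupOf Y).Normal]
    (χ : ↥X → ℂ)
    (ζ : ↥Y → ℂ) (hζ1 : ζ 1 = 1) (hζm : ∀ y₁ y₂ : ↥Y, ζ (y₁ * y₂) = ζ y₁ * ζ y₂)
    (hsame : ∀ (z : A) (hzX : z ∈ X) (hzY : z ∈ Y),
      χ ⟨z, hzX⟩ = χ 1 * ζ ⟨z, hzY⟩)
    -- the conjugation action of `Y/Z` on `X`:
    (φbar : (↥Y ⧸ (X ⊓ Y).subgroupOf Y) →* MulAut ↥X)
    (hφbar : ∀ y : ↥Y,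
      φbar ((QuotientGroup.mk y : ↥Y ⧸ (X ⊓ Y).subgroupOf Y)) = MulAut.conjNormal (y : A))
    -- the extension `χ̃` of `χ` to `X ⋊ (Y/Z)`:
    (V : FDRep ℂ (SemidirectProduct ↥X (↥Y ⧸ (X ⊓ Y).subgroupOf Y) φbar)) (hV : Simple V)
    (hext : ∀ x : ↥X, V.character (SemidirectProduct.inl x) = χ x) :
    ∃ F : A → ℂ, IsIrrChar A F ∧
      (∀ (x : ↥X) (y : ↥Y), F ((x : A) * (y : A)) =
        V.character (SemidirectProduct.inl x *
          SemidirectProduct.inr (QuotientGroup.mk y : ↥Y ⧸ (X ⊓ Y).subgroupOf Y)) * ζ y) ∧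
      (∀ x : ↥X, F (x : A) = χ x) := by
  let ζ' : Y →* ℂ := { toFun := ζ, map_one' := hζ1, map_mul' := hζm }
  have hdim : χ 1 = Module.finrank ℂ V := by rw [← hext, map_one, FDRep.char_one]
  have hscalar := ρ_inl_infToLeft_eq_smul_one ζ' V hφbar hZ fun κ => by
    rw [hext, ← hdim, mul_comm]
    exact hsame _ _ κ.1.2
  obtain ⟨ρ, hρ⟩ := exists_representation_apply_mul ζ' V hφbar hscalar hA
  have hF (x : X) (y : Y) : (FDRep.of ρ).character (x * y) =
      V.character (SemidirectProduct.inl x *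
        SemidirectProduct.inr (y : Y ⧸ (X ⊓ Y).subgroupOf Y)) * ζ y := by
    simp [FDRep.character, hρ, ζ', mul_comm]
  refine ⟨(FDRep.of ρ).character, ⟨_, simple_of_apply_mul ζ' V ρ hρ, rfl⟩, hF,
    fun x => ?_⟩
  simpa [hζ1, hext] using hF x 1

/-- Let `A = XY` be a finite group with `X ⊴ A` and
`Z := X ∩ Y ⊆ Z(X)`.  Suppose `χ ∈ Irr(X)` is `A`-invariant, `ζ ∈ Irr(Y)` is linear, and
`χ`, `ζ` lie over the same character of `Z`.  If `χ̃` is an extension of `χ` to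
`X ⋊ (Y/Z)`, then `(χ̃·ζ)(xy) = χ̃(x, yZ)·ζ(y)` is a well-defined irreducible character
of `A` extending `χ`. -/
theorem stmt16 {A : Type} [Group A] [Fintype A]
    (X Y : Subgroup A) [hXn : X.Normal]
    (hA : X ⊔ Y = ⊤)
    (hZ : ∀ z ∈ X ⊓ Y, ∀ x ∈ X, z * x = x * z)
    [hN : ((X ⊓ Y).subgroupOf Y).Normal]
    (χ : ↥X → ℂ) (hχ : IsIrrChar ↥X χ)
    (hinv : ∀ (a : A) (x : ↥X) (h : a * (x : A) * a⁻¹ ∈ X),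
      χ ⟨a * (x : A) * a⁻¹, h⟩ = χ x)
    (ζ : ↥Y → ℂ) (hζ1 : ζ 1 = 1) (hζm : ∀ y₁ y₂ : ↥Y, ζ (y₁ * y₂) = ζ y₁ * ζ y₂)
    (hsame : ∀ (z : A) (hzX : z ∈ X) (hzY : z ∈ Y),
      χ ⟨z, hzX⟩ = χ 1 * ζ ⟨z, hzY⟩)
    -- the conjugation action of `Y/Z` on `X`:
    (φbar : (↥Y ⧸ (X ⊓ Y).subgroupOf Y) →* MulAut ↥X)
    (hφbar : ∀ y : ↥Y,
      φbar ((QuotientGroup.mk y : ↥Y ⧸ (X ⊓ Y).subgroupOf Y)) = MulAut.conjNormal (y : A))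
    -- the extension `χ̃` of `χ` to `X ⋊ (Y/Z)`:
    (V : FDRep ℂ (SemidirectProduct ↥X (↥Y ⧸ (X ⊓ Y).subgroupOf Y) φbar)) (hV : Simple V)
    (hext : ∀ x : ↥X, V.character (SemidirectProduct.inl x) = χ x) :
    ∃ F : A → ℂ, IsIrrChar A F ∧
      (∀ (x : ↥X) (y : ↥Y), F ((x : A) * (y : A)) =
        V.character (SemidirectProduct.inl x *
          SemidirectProduct.inr (QuotientGroup.mk y : ↥Y ⧸ (X ⊓ Y).subgroupOf Y)) * ζ y) ∧
      (∀ x : ↥X, F (x : A) = χ x) :=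
  stmt16_general X Y (hXn := hXn) hA hZ (hN := hN) χ ζ hζ1 hζm hsame φbar hφbar V hV hext
end

section
/- Fix a prime ℓ and a positive integer m with a := ν_ℓ(m). For 0 ≤ γ, let U_m(γ) be the set of partitions μ of m such that ν_ℓ(gcd of the parts of the transposed partition μ′) = γ, and let p(k) denote the number of partitions of k. Then |U_m(γ)| = p(m/ℓ^γ) − p(m/ℓ^{γ+1}) for 0 ≤ γ < a, |U_m(a)| = p(m/ℓ^a), and |U_m(γ)| = 0 for γ > a. -/
/-!
The multiplicity of `a` in `μ` is `μ′_a - μ′_{a+1}`, so `d ∣ Δ(μ′)` exactly when every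
multiplicity of `μ` is divisible by `d`, i.e. when `μ` is `d • λ` (each part of `λ` repeated
`d` times) for a partition `λ` of `m / d`. Hence `ℓ ^ c ∣ Δ(μ′)` holds for `p(m / ℓ ^ c)`
partitions if `ℓ ^ c ∣ m` and for none otherwise, and `|U_m(γ)|` is the difference of these
counts at `c = γ` and `c = γ + 1`.
-/

/-- The gcd of the parts of the transposed (conjugate) partition `μ′` of `μ ⊢ m`:
the `j`-th part of `μ′` is the number of parts of `μ` that are `≥ j`. -/
def conjGcd {m : ℕ} (μ : Nat.Partition m) : ℕ :=
  Finset.gcd (Finset.Icc 1 m) fun j => (μ.parts.filter fun v => j ≤ v).card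

theorem Nat.card_eq_card_le_sub_card_succ_le {α : Type*} [Finite α] (v : α → ℕ) (n : ℕ) :
    Nat.card {x // v x = n} = Nat.card {x // n ≤ v x} - Nat.card {x // n + 1 ≤ v x} := by
  have h : {x | v x = n} = {x | n ≤ v x} \ {x | n + 1 ≤ v x} := by
    ext x
    simp only [Set.mem_ofPred_eq, Set.mem_sdiff]
    omega
  change Nat.card {x | v x = n} = Nat.card {x | n ≤ v x} - Nat.card {x | n + 1 ≤ v x}
  rw [Nat.card_coe_set_eq, Nat.card_coe_set_eq, Nat.card_coe_set_eq, h, Set.ncard_sdiff]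
  exact fun x (hx : n + 1 ≤ v x) => (Nat.le_succ n).trans hx

namespace Multiset

theorem card_filter_le_eq_count_add (s : Multiset ℕ) (a : ℕ) :
    (s.filter (a ≤ ·)).card = s.count a + (s.filter (a + 1 ≤ ·)).card := by
  have hsplit := filter_add_not (a + 1 ≤ ·) (s.filter (a ≤ ·))
  rw [filter_filter, filter_filter] at hsplit
  rw [← hsplit, card_add, count_eq_card_filter_eq, add_comm]
  congr 2 <;> apply filter_congr <;> intros <;> omega

theorem forall_dvd_card_filter_le_iff (s : Multiset ℕ) (d : ℕ) :
    (∀ j, d ∣ (s.filter (j ≤ ·)).card) ↔ ∀ a, d ∣ s.count a := by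
  refine ⟨fun h a => ?_, fun h j => ?_⟩
  · have := Nat.dvd_sub (h a) (h (a + 1))
    rwa [card_filter_le_eq_count_add, Nat.add_sub_cancel] at this
  · obtain ⟨u, rfl⟩ := exists_smul_of_dvd_count s fun a _ => h a
    rw [filter_nsmul, card_nsmul]
    exact Dvd.intro _ rfl

end Multiset

namespace Nat.Partition

theorem card_filter_le_eq_zero {m : ℕ} (μ : Nat.Partition m) {j : ℕ} (hj : m < j) :
    (μ.parts.filter (j ≤ ·)).card = 0 := by
  rw [Multiset.card_eq_zero, Multiset.filter_eq_nil]
  intro v hv hjv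
  have := Multiset.le_sum_of_mem hv
  rw [μ.parts_sum] at this
  omega

theorem card_filter_zero_le {m : ℕ} (μ : Nat.Partition m) :
    (μ.parts.filter (0 ≤ ·)).card = (μ.parts.filter (1 ≤ ·)).card := by
  rw [Multiset.filter_eq_self.mpr fun _ _ => zero_le _,
    (Multiset.filter_eq_self (p := (1 ≤ ·))).mpr fun _ => μ.parts_pos]

def scale {d m : ℕ} (hdm : d ∣ m) (lam : Nat.Partition (m / d)) : Nat.Partition m where
  parts := d • lam.parts
  parts_pos h := lam.parts_pos (Multiset.mem_of_mem_nsmul h)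
  parts_sum := by rw [Multiset.sum_nsmul, lam.parts_sum, smul_eq_mul, Nat.mul_div_cancel' hdm]

theorem scale_injective {d m : ℕ} (hd : d ≠ 0) (hdm : d ∣ m) :
    Function.Injective (scale hdm) := fun _ _ h =>
  Nat.Partition.ext (nsmul_right_injective hd (congrArg Nat.Partition.parts h))

end Nat.Partition

open Nat.Partition

theorem dvd_conjGcd_iff {m d : ℕ} (μ : Nat.Partition m) :
    d ∣ conjGcd μ ↔ ∀ a, d ∣ μ.parts.count a := by
  rw [conjGcd, Finset.dvd_gcd_iff, ← Multiset.forall_dvd_card_filter_le_iff]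
  refine ⟨fun h => ?_, fun h j _ => h j⟩
  have hpos (j : ℕ) (hj : 1 ≤ j) : d ∣ (μ.parts.filter (j ≤ ·)).card := by
    by_cases hjm : j ≤ m
    · exact h j (Finset.mem_Icc.mpr ⟨hj, hjm⟩)
    · simp [card_filter_le_eq_zero μ (not_le.mp hjm)]
  rintro (_ | j)
  · rw [card_filter_zero_le]
    exact hpos 1 le_rfl
  · exact hpos _ j.succ_pos

theorem conjGcd_dvd {m : ℕ} (μ : Nat.Partition m) : conjGcd μ ∣ m := by
  obtain ⟨u, hu⟩ := Multiset.exists_smul_of_dvd_count μ.parts fun a _ =>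
    (dvd_conjGcd_iff μ).mp dvd_rfl a
  have hsum := μ.parts_sum
  rw [hu, Multiset.sum_nsmul, smul_eq_mul] at hsum
  exact Dvd.intro _ hsum

theorem conjGcd_ne_zero {m : ℕ} (hm : m ≠ 0) (μ : Nat.Partition m) : conjGcd μ ≠ 0 :=
  fun h => hm (Nat.eq_zero_of_zero_dvd (h ▸ conjGcd_dvd μ))

theorem range_scale {d m : ℕ} (hd : d ≠ 0) (hdm : d ∣ m) :
    Set.range (scale hdm) = {μ | d ∣ conjGcd μ} := by
  ext μ
  rw [Set.mem_ofPred_eq, dvd_conjGcd_iff]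
  constructor
  · rintro ⟨lam, rfl⟩ a
    exact ⟨lam.parts.count a, Multiset.count_nsmul ..⟩
  · intro h
    obtain ⟨u, hu⟩ := Multiset.exists_smul_of_dvd_count μ.parts fun a _ => h a
    have hsum : u.sum = m / d := by
      rw [← μ.parts_sum, hu, Multiset.sum_nsmul, smul_eq_mul,
        Nat.mul_div_cancel_left _ (Nat.pos_of_ne_zero hd)]
    exact ⟨⟨u, fun hx => μ.parts_pos (hu ▸ Multiset.mem_nsmul.mpr ⟨hd, hx⟩), hsum⟩,
      Nat.Partition.ext hu.symm⟩

theorem card_dvd_conjGcd {d m : ℕ} (hd : d ≠ 0) (hdm : d ∣ m) :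
    Nat.card {μ : Nat.Partition m // d ∣ conjGcd μ} = Nat.card (Nat.Partition (m / d)) := by
  rw [← Nat.card_range_of_injective (scale_injective hd hdm), range_scale hd hdm]
  rfl

theorem card_dvd_conjGcd_of_not_dvd {d m : ℕ} (hdm : ¬ d ∣ m) :
    Nat.card {μ : Nat.Partition m // d ∣ conjGcd μ} = 0 :=
  Nat.card_eq_zero.mpr (Or.inl ⟨fun μ => hdm (μ.2.trans (conjGcd_dvd μ.1))⟩)

theorem card_le_padicValNat_conjGcd {ℓ m : ℕ} [Fact ℓ.Prime] (hm : m ≠ 0) (c : ℕ) :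
    Nat.card {μ : Nat.Partition m // c ≤ padicValNat ℓ (conjGcd μ)} =
      if c ≤ padicValNat ℓ m then Nat.card (Nat.Partition (m / ℓ ^ c)) else 0 := by
  have hval (μ : Nat.Partition m) : c ≤ padicValNat ℓ (conjGcd μ) ↔ ℓ ^ c ∣ conjGcd μ :=
    (padicValNat_dvd_iff_le (conjGcd_ne_zero hm μ)).symm
  simp_rw [hval, ← padicValNat_dvd_iff_le hm]
  split_ifs with h
  · exact card_dvd_conjGcd (pow_ne_zero _ (Fact.out : ℓ.Prime).ne_zero) h
  · exact card_dvd_conjGcd_of_not_dvd h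

/-- Fix a prime `ℓ` and `m > 0` with `a := ν_ℓ(m)`.  Let `U_m(γ)` be the
set of partitions `μ ⊢ m` with `ν_ℓ(Δ(μ′)) = γ`, where `Δ(μ′)` is the gcd of the parts of
the transpose, and let `p(k)` be the number of partitions of `k`.  Then
`|U_m(γ)| = p(m/ℓ^γ) − p(m/ℓ^{γ+1})` for `0 ≤ γ < a`, `|U_m(a)| = p(m/ℓ^a)`, and
`|U_m(γ)| = 0` for `γ > a`. -/
theorem stmt17 (ℓ m : ℕ) (hℓ : ℓ.Prime) (hm : 0 < m) (γ : ℕ) :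
    (γ < padicValNat ℓ m →
      Nat.card {μ : Nat.Partition m // padicValNat ℓ (conjGcd μ) = γ} =
        Nat.card (Nat.Partition (m / ℓ ^ γ)) - Nat.card (Nat.Partition (m / ℓ ^ (γ + 1)))) ∧
    (γ = padicValNat ℓ m →
      Nat.card {μ : Nat.Partition m // padicValNat ℓ (conjGcd μ) = γ} =
        Nat.card (Nat.Partition (m / ℓ ^ γ))) ∧
    (padicValNat ℓ m < γ →
      Nat.card {μ : Nat.Partition m // padicValNat ℓ (conjGcd μ) = γ} = 0) := by
  have := Fact.mk hℓ
  rw [Nat.card_eq_card_le_sub_card_succ_le, card_le_padicValNat_conjGcd hm.ne',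
    card_le_padicValNat_conjGcd hm.ne']
  refine ⟨fun h => ?_, fun h => ?_, fun h => ?_⟩ <;> split_ifs <;> omega
end

section
/- Let q be a prime power, ℓ a prime not dividing q, η = ±1, e the multiplicative order of ηq modulo ℓ, and a = ν_ℓ((ηq)^e − 1) (with the convention a = ν_2(q+η) when ℓ = 2 and 4 | q+η). Suppose ξ ∈ F̄_q^× has multiplicative order k with ℓ ∤ k, and ξ′ ∈ F̄_q^× has order kℓ^α with α > 0. Let d (resp. d′) be the size of the orbit of ξ (resp. ξ′) under the map x ↦ x^{ηq}. If ℓ is odd, or ℓ = 2 with 4 | q−η, or ℓ = 2 with 4 | q+η and ν_2(d/ (e·d_0)) > 0 for the appropriate decomposition, then writing d = m e ℓ^{α_0} with ℓ ∤ m, one has d′ = d · ℓ^{max{0, α − a − α_0}}. -/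
/-!
The orbit of `x` under `y ↦ y ^ n` has size the order of `n` modulo `orderOf x`. By the Chinese
remainder theorem the order of `n = ηq` modulo `kℓ^α` is the lcm of its orders modulo `k` (that is,
`d`) and modulo `ℓ^α`. The latter is `e · ℓ^(α - a)`: modulo `ℓ`, `n` has order `e`, and by the
lifting-the-exponent lemma `ν_ℓ(n^(et) - 1) = a + ν_ℓ(t)`; this is where `ℓ` odd or `4 ∣ n - 1`
is needed. Since `e ∣ d` and `ℓ ∤ m e`, the lcm is `d · ℓ^(α - a - α₀)`.
-/

open Function

theorem ZMod.orderOf_intCast_dvd_iff (n : ℤ) (N s : ℕ) :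
    orderOf (n : ZMod N) ∣ s ↔ (N : ℤ) ∣ n ^ s - 1 := by
  rw [orderOf_dvd_iff_pow_eq_one, ← Int.cast_pow, ← Int.cast_one,
    ZMod.intCast_eq_intCast_iff_dvd_sub, dvd_sub_comm]

theorem ZMod.orderOf_intCast_dvd_orderOf_intCast (n : ℤ) {N M : ℕ} (h : N ∣ M) :
    orderOf (n : ZMod N) ∣ orderOf (n : ZMod M) :=
  (orderOf_intCast_dvd_iff n N _).2 <|
    (Int.natCast_dvd_natCast.2 h).trans ((orderOf_intCast_dvd_iff n M _).1 dvd_rfl)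

theorem ZMod.orderOf_intCast_dvd_prime_sub_one {ℓ : ℕ} (hℓ : ℓ.Prime) {n : ℤ}
    (hℓn : ¬ (ℓ : ℤ) ∣ n) : orderOf (n : ZMod ℓ) ∣ ℓ - 1 := by
  have : Fact ℓ.Prime := ⟨hℓ⟩
  exact orderOf_dvd_of_pow_eq_one <| ZMod.pow_card_sub_one_eq_one <| by
    rwa [Ne, ZMod.intCast_zmod_eq_zero_iff_dvd]

theorem ZMod.orderOf_intCast_mul (n : ℤ) {k l : ℕ} (h : k.Coprime l) :
    orderOf (n : ZMod (k * l)) = (orderOf (n : ZMod k)).lcm (orderOf (n : ZMod l)) := by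
  rw [← (ZMod.chineseRemainder h).toMulEquiv.orderOf_eq, RingEquiv.toMulEquiv_eq_coe,
    RingEquiv.coe_toMulEquiv, map_intCast, ← Prod.orderOf_mk]
  rfl

theorem minimalPeriod_zpow_eq_orderOf {G : Type*} [Group G] (n : ℤ) (x : G) :
    minimalPeriod (fun y : G => y ^ n) x = orderOf (n : ZMod (orderOf x)) := by
  refine Nat.dvd_right_iff_eq.mp fun s => ?_
  rw [← isPeriodicPt_iff_minimalPeriod_dvd, IsPeriodicPt, IsFixedPt, zpow_iterate,
    ZMod.orderOf_intCast_dvd_iff, orderOf_dvd_iff_zpow_eq_one, zpow_sub, zpow_one,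
    mul_inv_eq_one]

theorem orderOf_eq_mul_orderOf_pow_of_dvd {M : Type*} [Monoid M] {x : M} {d : ℕ}
    (h : d ∣ orderOf x) : orderOf x = d * orderOf (x ^ d) := by
  rcases eq_or_ne d 0 with rfl | hd
  · simpa using h
  · rw [orderOf_pow_of_dvd hd h, Nat.mul_div_cancel' h]

theorem Int.emultiplicity_pow_sub_one {ℓ : ℕ} (hℓ : ℓ.Prime) {g : ℤ} (hg : (ℓ : ℤ) ∣ g - 1)
    (h2 : ℓ = 2 → (4 : ℤ) ∣ g - 1) (t : ℕ) :
    emultiplicity (ℓ : ℤ) (g ^ t - 1) = emultiplicity (ℓ : ℤ) (g - 1) + emultiplicity ℓ t := by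
  have hℓg : ¬ (ℓ : ℤ) ∣ g := fun h => by
    have : (ℓ : ℤ) ∣ 1 := by simpa using dvd_sub h hg
    exact hℓ.ne_one (by exact_mod_cast Int.eq_one_of_dvd_one (by positivity) this)
  rcases hℓ.eq_two_or_odd' with rfl | hodd
  · have h := Int.two_pow_sub_pow' (y := 1) t (h2 rfl) hℓg
    rw [one_pow] at h
    rw [← Int.natCast_emultiplicity]
    exact_mod_cast h
  · simpa using Int.emultiplicity_pow_sub_pow hℓ hodd hg hℓg t

theorem padicValInt_eq_emultiplicity {ℓ : ℕ} (hℓ : ℓ ≠ 1) {z : ℤ} (hz : z ≠ 0) :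
    (padicValInt ℓ z : ℕ∞) = emultiplicity (ℓ : ℤ) z := by
  rw [padicValInt.of_ne_one_ne_zero hℓ hz,
    (Int.finiteMultiplicity_iff.2 ⟨by exact_mod_cast hℓ, hz⟩).emultiplicity_eq_multiplicity]

theorem ZMod.orderOf_intCast_prime_pow_of_dvd_sub_one {ℓ : ℕ} (hℓ : ℓ.Prime) {g : ℤ}
    (hg1 : g ≠ 1) (hg : (ℓ : ℤ) ∣ g - 1) (h2 : ℓ = 2 → (4 : ℤ) ∣ g - 1) (α : ℕ) :
    orderOf (g : ZMod (ℓ ^ α)) = ℓ ^ (α - padicValInt ℓ (g - 1)) := by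
  refine Nat.dvd_right_iff_eq.mp fun s => ?_
  rw [orderOf_intCast_dvd_iff, Nat.cast_pow, pow_dvd_iff_le_emultiplicity,
    Int.emultiplicity_pow_sub_one hℓ hg h2, pow_dvd_iff_le_emultiplicity,
    ← padicValInt_eq_emultiplicity hℓ.ne_one (sub_ne_zero.2 hg1), ENat.natCast_sub,
    tsub_le_iff_left]

theorem ZMod.orderOf_intCast_prime_pow {ℓ : ℕ} (hℓ : ℓ.Prime) {n : ℤ} (hℓn : ¬ (ℓ : ℤ) ∣ n)
    (hn : 1 < n.natAbs) (h2 : ℓ = 2 → (4 : ℤ) ∣ n - 1) {α : ℕ} (hα : 0 < α) :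
    orderOf (n : ZMod (ℓ ^ α)) =
      orderOf (n : ZMod ℓ) * ℓ ^ (α - padicValInt ℓ (n ^ orderOf (n : ZMod ℓ) - 1)) := by
  set e := orderOf (n : ZMod ℓ)
  have he : e ∣ ℓ - 1 := orderOf_intCast_dvd_prime_sub_one hℓ hℓn
  have he0 : e ≠ 0 := fun h => by
    rw [h, zero_dvd_iff] at he
    have := hℓ.two_le
    omega
  rw [orderOf_eq_mul_orderOf_pow_of_dvd
      (orderOf_intCast_dvd_orderOf_intCast n (dvd_pow_self ℓ hα.ne')),
    ← Int.cast_pow, orderOf_intCast_prime_pow_of_dvd_sub_one hℓ _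
      ((orderOf_intCast_dvd_iff n ℓ e).1 dvd_rfl)]
  · rintro rfl
    have he1 : e = 1 := Nat.dvd_one.mp he
    simpa [he1] using h2 rfl
  · intro h
    have := congrArg Int.natAbs h
    rw [Int.natAbs_pow] at this
    exact (Nat.one_lt_pow he0 hn).ne' this

theorem Nat.lcm_mul_pow_mul_pow {u v ℓ : ℕ} (hu : u.Coprime ℓ) (hvu : v ∣ u) (i j : ℕ) :
    (u * ℓ ^ i).lcm (v * ℓ ^ j) = u * ℓ ^ i * ℓ ^ (j - i) := by
  have hmax : u * ℓ ^ i * ℓ ^ (j - i) = u * ℓ ^ max i j := by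
    rw [mul_assoc, ← pow_add]
    congr 2
    omega
  rw [hmax]
  refine Nat.dvd_antisymm (Nat.lcm_dvd ?_ ?_) ?_
  · exact mul_dvd_mul_left u (pow_dvd_pow ℓ (le_max_left i j))
  · exact mul_dvd_mul hvu (pow_dvd_pow ℓ (le_max_right i j))
  · refine (hu.pow_right _).mul_dvd_of_dvd_of_dvd
      ((dvd_mul_right u _).trans (Nat.dvd_lcm_left _ _)) ?_
    rcases le_total i j with h | h
    · rw [max_eq_right h]
      exact (dvd_mul_left _ _).trans (Nat.dvd_lcm_right _ _)
    · rw [max_eq_left h]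
      exact (dvd_mul_left _ _).trans (Nat.dvd_lcm_left _ _)

theorem stmt18_general (p f q : ℕ) (hp : p.Prime) (hf : 0 < f) (hq : q = p ^ f)
    (ℓ : ℕ) (hℓ : ℓ.Prime) (hℓq : ¬ ℓ ∣ q)
    (η : ℤ) (hη : η = 1 ∨ η = -1)
    (hcase : Odd ℓ ∨ (ℓ = 2 ∧ (4 : ℤ) ∣ (q : ℤ) - η))
    (e a : ℕ) (he : e = orderOf ((η * (q : ℤ) : ℤ) : ZMod ℓ))
    (ha : a = padicValInt ℓ ((η * (q : ℤ)) ^ e - 1))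
    (K : Type*) [Field K]
    (ξ ξ' : Kˣ) (k : ℕ) (hℓk : ¬ ℓ ∣ k)
    (hordξ : orderOf ξ = k)
    (α : ℕ) (hα : 0 < α) (hordξ' : orderOf ξ' = k * ℓ ^ α)
    (d d' : ℕ)
    (hd : d = Function.minimalPeriod (fun x : Kˣ => x ^ (η * (q : ℤ))) ξ)
    (hd' : d' = Function.minimalPeriod (fun x : Kˣ => x ^ (η * (q : ℤ))) ξ')
    (m α₀ : ℕ) (hm : ¬ ℓ ∣ m) (hdecomp : d = m * e * ℓ ^ α₀) :
    d' = d * ℓ ^ (α - a - α₀) := by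
  set n : ℤ := η * q
  have hnq : n.natAbs = q := by rcases hη with rfl | rfl <;> simp [n]
  have hn : 1 < n.natAbs := hnq ▸ hq ▸ Nat.one_lt_pow hf.ne' hp.one_lt
  have hℓn : ¬ (ℓ : ℤ) ∣ n := by
    rwa [← Int.natAbs_dvd_natAbs, hnq, Int.natAbs_natCast]
  have h2 : ℓ = 2 → (4 : ℤ) ∣ n - 1 := by
    rintro rfl
    obtain hodd | ⟨-, h4⟩ := hcase
    · exact absurd hodd (by decide)
    · have hn1 : n - 1 = η * (q - η) := by rcases hη with rfl | rfl <;> ring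
      exact hn1 ▸ h4.mul_left η
  have hℓe : ¬ ℓ ∣ e := fun h => by
    have hℓ2 := hℓ.two_le
    have heℓ : e ∣ ℓ - 1 := he ▸ ZMod.orderOf_intCast_dvd_prime_sub_one hℓ hℓn
    have := Nat.le_of_dvd (by omega) (h.trans heℓ)
    omega
  have hcop : k.Coprime (ℓ ^ α) := ((hℓ.coprime_iff_not_dvd.2 hℓk).symm).pow_right α
  have hme : (m * e).Coprime ℓ :=
    ((hℓ.coprime_iff_not_dvd.2 hm).mul_right (hℓ.coprime_iff_not_dvd.2 hℓe)).symm
  rw [hd', minimalPeriod_zpow_eq_orderOf, hordξ', ZMod.orderOf_intCast_mul n hcop, ← hordξ,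
    ← minimalPeriod_zpow_eq_orderOf, ← hd, ZMod.orderOf_intCast_prime_pow hℓ hℓn hn h2 hα,
    ← he, ← ha, hdecomp, Nat.lcm_mul_pow_mul_pow hme (dvd_mul_left e m)]

/-- Let `q = p^f` be a prime power, `ℓ` a prime not dividing `q`,
`η = ±1`, `e` the multiplicative order of `ηq` modulo `ℓ` and `a = ν_ℓ((ηq)^e − 1)`.
Assume `ℓ` is odd, or `ℓ = 2` and `4 ∣ q − η`.  Let `K` be a field of characteristic `p`
(e.g. `F̄_q`), let `ξ ∈ K^×` have order `k` with `ℓ ∤ k`, and `ξ′ ∈ K^×` have order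
`kℓ^α` with `α > 0`.  Let `d`, `d′` be the sizes of the orbits of `ξ`, `ξ′` under
`x ↦ x^{ηq}` (i.e. their minimal periods).  Writing `d = m·e·ℓ^{α₀}` with `ℓ ∤ m`, one has
`d′ = d · ℓ^{max{0, α − a − α₀}}`. -/
theorem stmt18 (p f q : ℕ) (hp : p.Prime) (hf : 0 < f) (hq : q = p ^ f)
    (ℓ : ℕ) (hℓ : ℓ.Prime) (hℓq : ¬ ℓ ∣ q)
    (η : ℤ) (hη : η = 1 ∨ η = -1)
    (hcase : Odd ℓ ∨ (ℓ = 2 ∧ (4 : ℤ) ∣ (q : ℤ) - η))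
    (e a : ℕ) (he : e = orderOf ((η * (q : ℤ) : ℤ) : ZMod ℓ))
    (ha : a = padicValInt ℓ ((η * (q : ℤ)) ^ e - 1))
    (K : Type*) [Field K] (hchar : CharP K p)
    (ξ ξ' : Kˣ) (k : ℕ) (hk : 0 < k) (hℓk : ¬ ℓ ∣ k)
    (hordξ : orderOf ξ = k)
    (α : ℕ) (hα : 0 < α) (hordξ' : orderOf ξ' = k * ℓ ^ α)
    (d d' : ℕ)
    (hd : d = Function.minimalPeriod (fun x : Kˣ => x ^ (η * (q : ℤ))) ξ)
    (hd' : d' = Function.minimalPeriod (fun x : Kˣ => x ^ (η * (q : ℤ))) ξ')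
    (m α₀ : ℕ) (hm : ¬ ℓ ∣ m) (hdecomp : d = m * e * ℓ ^ α₀) :
    d' = d * ℓ ^ (α - a - α₀) :=
  stmt18_general p f q hp hf hq ℓ hℓ hℓq η hη hcase e a he ha K ξ ξ' k hℓk hordξ α hα hordξ' d d' hd
    hd' m α₀ hm hdecomp
end
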